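/- arXiv:1406.1109 — 2 statements merged into one kernel-verified Lean document; each statement's English description precedes it below -/
import Mathlib

section
/- Let 𝔄 be a Banach algebra and μ ∈ 𝔄*. Define L_μ : 𝔄 → 𝔄*, a ↦ μ·a and R_μ : 𝔄 → 𝔄*, a ↦ a·μ (the module actions ⟨μ·a, b⟩ = ⟨μ, ab⟩, ⟨a·μ, b⟩ = ⟨μ, ba⟩). Then L_μ is weakly compact if and only if R_μ is weakly compact. -/
/-! If `T` is weakly compact, so is its adjoint `T*` (one half of Gantmacher's theorem): by
Goldstine's theorem `T**` maps the unit ball of the bidual into the weak*-closure of `κ(T(ball))`,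
which stays inside `κ(F)` because the weak closure of `T(ball)` is weakly compact. Hence `T*` is
weak*-to-weak continuous and maps the Banach–Alaoglu-compact dual ball onto a weakly compact set.
For a bounded bilinear form `B`, the flip `B.flip` factors as `B* ∘ κ` with `‖κ‖ ≤ 1`, so it is
weakly compact together with `B`; and `R_μ` is the flip of `L_μ`. -/

open Metric

/-- A bounded linear map between normed spaces is weakly compact if the image of the
closed unit ball is relatively compact in the weak topology of the codomain. -/
def IsWeaklyCompactMap {E F : Type*} [NormedAddCommGroup E] [NormedSpace ℂ E]
    [NormedAddCommGroup F] [NormedSpace ℂ F] (T : E → F) : Prop :=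
  IsCompact (closure ((toWeakSpace ℂ F) '' (T '' closedBall (0 : E) 1)))

open NormedSpace

section RCLike

variable {𝕜 X : Type*} [RCLike 𝕜] [NormedAddCommGroup X] [NormedSpace 𝕜 X]

instance WeakDual.instIsScalarTowerReal : IsScalarTower ℝ 𝕜 (WeakDual 𝕜 X) :=
  WeakBilin.instIsScalarTower (topDualPairing 𝕜 X)

instance WeakDual.instLocallyConvexSpaceReal : LocallyConvexSpace ℝ (WeakDual 𝕜 X) :=
  WeakBilin.locallyConvexSpace (B := topDualPairing 𝕜 X)

theorem WeakDual.exists_eq_eval (f : WeakDual 𝕜 X →L[𝕜] 𝕜) :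
    ∃ x : X, ∀ φ : WeakDual 𝕜 X, f φ = φ x := by
  obtain ⟨x, hx⟩ := LinearMap.dualEmbedding_surjective (topDualPairing 𝕜 X) f
  exact ⟨x, fun φ => by rw [← hx]; rfl⟩

theorem StrongDual.norm_le_of_forall_re_le {φ : StrongDual 𝕜 X} {u : ℝ}
    (h : ∀ x ∈ closedBall (0 : X) 1, RCLike.re (φ x) ≤ u) : ‖φ‖ ≤ u := by
  have hu : 0 ≤ u := by simpa using h 0 (mem_closedBall_self zero_le_one)
  refine φ.opNorm_le_of_unit_norm hu fun x hx => ?_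
  -- rotate `x` by a unimodular scalar so that `φ` takes the real value `‖φ x‖` there
  set c : 𝕜 := starRingEnd 𝕜 (φ x) / ‖φ x‖
  have hc : ‖c • x‖ ≤ 1 := by
    rcases eq_or_ne (φ x) 0 with h0 | h0
    · simp [c, h0]
    · simp [c, norm_smul, hx, h0]
  have hφc : RCLike.re (φ (c • x)) = ‖φ x‖ := by
    simp only [c, map_smul, smul_eq_mul, div_mul_eq_mul_div, RCLike.conj_mul]
    rw [← RCLike.ofReal_pow, ← RCLike.ofReal_div, RCLike.ofReal_re, sq, mul_self_div_self]
  exact hφc ▸ h _ (mem_closedBall_zero_iff.mpr hc)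

/-- **Goldstine's theorem**. -/
theorem NormedSpace.toWeakDual_mem_closure_inclusionInDoubleDual_closedBall
    {Ψ : StrongDual 𝕜 (StrongDual 𝕜 X)} (hΨ : ‖Ψ‖ ≤ 1) :
    StrongDual.toWeakDual Ψ ∈ closure
      ((fun x => StrongDual.toWeakDual (inclusionInDoubleDual 𝕜 X x)) '' closedBall (0 : X) 1) := by
  let _ : NormedSpace ℝ X := NormedSpace.restrictScalars ℝ 𝕜 X
  let g : X →ₗ[𝕜] WeakDual 𝕜 (StrongDual 𝕜 X) :=
    StrongDual.toWeakDual.toLinearMap ∘ₗ (inclusionInDoubleDual 𝕜 X).toLinearMap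
  have hball : Convex ℝ (g '' closedBall (0 : X) 1) :=
    (convex_closedBall (0 : X) 1).linear_image (g.restrictScalars ℝ)
  by_contra hΨK
  obtain ⟨f, u, hfK, hfΨ⟩ :=
    RCLike.geometric_hahn_banach_closed_point (𝕜 := 𝕜) hball.closure isClosed_closure hΨK
  obtain ⟨φ, hφ⟩ := WeakDual.exists_eq_eval f
  have hφu : ‖φ‖ ≤ u := StrongDual.norm_le_of_forall_re_le fun x hx => by
    simpa [hφ] using (hfK _ (subset_closure ⟨x, hx, rfl⟩)).le
  have hΨφ : RCLike.re (Ψ φ) ≤ u := calc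
    RCLike.re (Ψ φ) ≤ ‖Ψ φ‖ := RCLike.re_le_norm _
    _ ≤ ‖Ψ‖ * ‖φ‖ := Ψ.le_opNorm φ
    _ ≤ 1 * u := mul_le_mul hΨ hφu (norm_nonneg _) zero_le_one
    _ = u := one_mul u
  rw [hφ] at hfΨ
  exact hfΨ.not_ge hΨφ

end RCLike

section Adjoint

variable {𝕜 E F : Type*} [NontriviallyNormedField 𝕜] [NormedAddCommGroup E] [NormedSpace 𝕜 E]
  [NormedAddCommGroup F] [NormedSpace 𝕜 F]

noncomputable def ContinuousLinearMap.dualMap (T : E →L[𝕜] F) :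
    StrongDual 𝕜 F →L[𝕜] StrongDual 𝕜 E :=
  (ContinuousLinearMap.compL 𝕜 E F 𝕜).flip T

@[simp]
theorem ContinuousLinearMap.dualMap_apply (T : E →L[𝕜] F) (φ : StrongDual 𝕜 F) (x : E) :
    T.dualMap φ x = φ (T x) :=
  rfl

theorem ContinuousLinearMap.continuous_dualMap_toWeakDual (T : E →L[𝕜] F) :
    Continuous fun φ : WeakDual 𝕜 F =>
      StrongDual.toWeakDual (T.dualMap (WeakDual.toStrongDual φ)) :=
  WeakDual.continuous_of_continuous_eval fun x => WeakDual.eval_continuous (T x)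

end Adjoint

section WeaklyCompact

variable {E F : Type*} [NormedAddCommGroup E] [NormedSpace ℂ E]
  [NormedAddCommGroup F] [NormedSpace ℂ F]

theorem IsWeaklyCompactMap.of_image_subset {G : Type*} [NormedAddCommGroup G] [NormedSpace ℂ G]
    {T : E → F} {S : G → F} (hS : IsWeaklyCompactMap S)
    (h : T '' closedBall 0 1 ⊆ S '' closedBall 0 1) : IsWeaklyCompactMap T :=
  hS.of_isClosed_subset isClosed_closure (closure_mono (Set.image_mono h))

theorem IsWeaklyCompactMap.dualMap_dualMap_mem_range_of_norm_le_one {T : E →L[ℂ] F}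
    (hT : IsWeaklyCompactMap (T : E → F)) {Ψ : StrongDual ℂ (StrongDual ℂ E)} (hΨ : ‖Ψ‖ ≤ 1) :
    T.dualMap.dualMap Ψ ∈ Set.range (inclusionInDoubleDual ℂ F) := by
  set ι : WeakSpace ℂ F → WeakDual ℂ (StrongDual ℂ F) :=
    fun y => StrongDual.toWeakDual (inclusionInDoubleDual ℂ F ((toWeakSpace ℂ F).symm y))
  have hι : Continuous ι := WeakDual.continuous_of_continuous_eval fun φ =>
    WeakBilin.eval_continuous (topDualPairing ℂ F).flip φ
  have hιC : IsClosed (ι '' closure (toWeakSpace ℂ F '' (T '' closedBall 0 1))) :=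
    (hT.image hι).isClosed
  have hmem := image_closure_subset_closure_image T.dualMap.continuous_dualMap_toWeakDual
    ⟨_, toWeakDual_mem_closure_inclusionInDoubleDual_closedBall hΨ, rfl⟩
  -- on `κ(E)` the bitranspose `T**` is `κ ∘ T`, definitionally
  obtain ⟨y, -, hy⟩ := closure_minimal (by
    rintro - ⟨-, ⟨x, hx, rfl⟩, rfl⟩
    exact ⟨toWeakSpace ℂ F (T x), subset_closure ⟨T x, ⟨x, hx, rfl⟩, rfl⟩, rfl⟩) hιC hmem
  exact ⟨(toWeakSpace ℂ F).symm y, StrongDual.toWeakDual.injective hy⟩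

theorem IsWeaklyCompactMap.dualMap_dualMap_mem_range {T : E →L[ℂ] F}
    (hT : IsWeaklyCompactMap (T : E → F)) (Ψ : StrongDual ℂ (StrongDual ℂ E)) :
    T.dualMap.dualMap Ψ ∈ Set.range (inclusionInDoubleDual ℂ F) := by
  set c : ℂ := ((‖Ψ‖ + 1 : ℝ) : ℂ)
  have hc : c ≠ 0 := Complex.ofReal_ne_zero.2 (by positivity)
  have hΨc : ‖c⁻¹ • Ψ‖ ≤ 1 := by
    refine (Ψ.opNorm_smul_le c⁻¹).trans ?_
    rw [norm_inv, Complex.norm_of_nonneg (by positivity), inv_mul_le_one₀ (by positivity)]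
    exact (lt_add_one _).le
  obtain ⟨y, hy⟩ := hT.dualMap_dualMap_mem_range_of_norm_le_one hΨc
  refine ⟨c • y, ?_⟩
  rw [map_smul, hy, map_smul, smul_inv_smul₀ hc]

theorem IsWeaklyCompactMap.continuous_dualMap {T : E →L[ℂ] F}
    (hT : IsWeaklyCompactMap (T : E → F)) :
    Continuous fun φ : WeakDual ℂ F => toWeakSpace ℂ (StrongDual ℂ E)
      (T.dualMap (WeakDual.toStrongDual φ)) := by
  refine WeakBilin.continuous_of_continuous_eval _ fun Ψ => ?_
  obtain ⟨y, hy⟩ := hT.dualMap_dualMap_mem_range Ψ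
  have hΨ : ∀ φ : StrongDual ℂ F, Ψ (T.dualMap φ) = φ y := fun φ => by
    rw [← T.dualMap.dualMap_apply, ← hy, dual_def]
  exact (WeakDual.eval_continuous y).congr fun φ => (hΨ _).symm

theorem IsWeaklyCompactMap.dualMap {T : E →L[ℂ] F} (hT : IsWeaklyCompactMap (T : E → F)) :
    IsWeaklyCompactMap (T.dualMap : StrongDual ℂ F → StrongDual ℂ E) := by
  have hK := (WeakDual.isCompact_closedBall (𝕜 := ℂ) (0 : StrongDual ℂ F) 1).image
    hT.continuous_dualMap
  refine hK.closure_of_subset ?_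
  rintro - ⟨-, ⟨φ, hφ, rfl⟩, rfl⟩
  exact ⟨StrongDual.toWeakDual φ, hφ, rfl⟩

theorem IsWeaklyCompactMap.flip {B : E →L[ℂ] F →L[ℂ] ℂ} (hB : IsWeaklyCompactMap (B : E → _)) :
    IsWeaklyCompactMap (B.flip : F → StrongDual ℂ E) := by
  refine hB.dualMap.of_image_subset ?_
  rintro - ⟨y, hy, rfl⟩
  refine ⟨inclusionInDoubleDual ℂ F y, ?_, rfl⟩
  exact mem_closedBall_zero_iff.2 ((double_dual_bound ℂ F y).trans (mem_closedBall_zero_iff.1 hy))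

theorem isWeaklyCompactMap_flip_iff {B : E →L[ℂ] F →L[ℂ] ℂ} :
    IsWeaklyCompactMap (B.flip : F → StrongDual ℂ E) ↔ IsWeaklyCompactMap (B : E → _) :=
  ⟨fun h => B.flip_flip ▸ h.flip, IsWeaklyCompactMap.flip⟩

end WeaklyCompact

theorem weakly_compact_left_iff_right_general
    {𝔄 : Type*} [NormedRing 𝔄] [NormedAlgebra ℂ 𝔄]
    (μ : 𝔄 →L[ℂ] ℂ)
    (L R : 𝔄 →L[ℂ] (𝔄 →L[ℂ] ℂ))
    (hL : ∀ a b : 𝔄, L a b = μ (a * b))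
    (hR : ∀ a b : 𝔄, R a b = μ (b * a)) :
    IsWeaklyCompactMap (L : 𝔄 → (𝔄 →L[ℂ] ℂ)) ↔ IsWeaklyCompactMap (R : 𝔄 → (𝔄 →L[ℂ] ℂ)) := by
  have hRL : R = L.flip := by
    ext a b
    rw [ContinuousLinearMap.flip_apply, hR, hL]
  rw [hRL, isWeaklyCompactMap_flip_iff]

/-- Let `𝔄` be a Banach algebra and `μ ∈ 𝔄*`.  With the module maps
`L_μ : a ↦ μ·a` (`⟨μ·a, b⟩ = μ(ab)`) and `R_μ : a ↦ a·μ` (`⟨a·μ, b⟩ = μ(ba)`),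
`L_μ` is weakly compact if and only if `R_μ` is weakly compact. -/
theorem weakly_compact_left_iff_right
    {𝔄 : Type*} [NormedRing 𝔄] [NormedAlgebra ℂ 𝔄] [CompleteSpace 𝔄]
    (μ : 𝔄 →L[ℂ] ℂ)
    (L R : 𝔄 →L[ℂ] (𝔄 →L[ℂ] ℂ))
    (hL : ∀ a b : 𝔄, L a b = μ (a * b))
    (hR : ∀ a b : 𝔄, R a b = μ (b * a)) :
    IsWeaklyCompactMap (L : 𝔄 → (𝔄 →L[ℂ] ℂ)) ↔ IsWeaklyCompactMap (R : 𝔄 → (𝔄 →L[ℂ] ℂ)) :=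
  weakly_compact_left_iff_right_general μ L R hL hR
end

section
/- Let (A, Φ, V, H) be a C*-Eberlein algebra. Then A* with the product ⟨μ ⋆ λ, a⟩ = ⟨Φ(a), μ ⊗ λ⟩ is a dual Banach algebra: multiplication is separately weak*-continuous. Moreover, for a = (id ⊗ ω)(V) ∈ A and μ ∈ A*, the module actions satisfy a·μ = (id ⊗ ωV_μ)(V) and μ·a = (id ⊗ V_μω)(V), where V_μ = (μ ⊗ id)(V). -/
open scoped InnerProductSpace
open Filter Topology NormedSpace

/-!
On a slice, `μ ⋆ λ` evaluates as `λ` at another slice: `⟨μ ⋆ λ, coef ξ η⟩ = (V_μ V_λ ξ | η)`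
equals `⟨λ, coef ξ (V_μ* η)⟩`, and likewise on the other side. So at each point of a set with
dense span, `λ ↦ ⟨μ ⋆ λ, ·⟩` is evaluation at an element of `A`. This makes `λ ↦ μ ⋆ λ` a
linear map with closed graph, hence bounded. The points `a` at which `λ ↦ ⟨μ ⋆ λ, a⟩` is
evaluation at an element of `A` then form a subspace that is closed, because `A` is closed in
`A**`; it contains the slices, so it is all of `A`.
-/

namespace ContinuousLinearMap

variable {𝕜 E : Type*} [RCLike 𝕜] [NormedAddCommGroup E] [NormedSpace 𝕜 E]

/-- The preimage of `E ⊆ E**` under the transpose of `T`. -/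
noncomputable def transposeRepresentable (T : StrongDual 𝕜 E →L[𝕜] StrongDual 𝕜 E) :
    Submodule 𝕜 E :=
  (inclusionInDoubleDual 𝕜 E : E →ₗ[𝕜] StrongDual 𝕜 (StrongDual 𝕜 E)).range.comap
    ((compL 𝕜 (StrongDual 𝕜 E) (StrongDual 𝕜 E) 𝕜).flip T ∘L inclusionInDoubleDual 𝕜 E :
      E →ₗ[𝕜] StrongDual 𝕜 (StrongDual 𝕜 E))

theorem mem_transposeRepresentable {T : StrongDual 𝕜 E →L[𝕜] StrongDual 𝕜 E} {a : E} :
    a ∈ T.transposeRepresentable ↔ ∃ b : E, ∀ lam, T lam a = lam b := by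
  simp only [transposeRepresentable, Submodule.mem_comap, LinearMap.mem_range,
    ContinuousLinearMap.ext_iff]
  exact exists_congr fun b => forall_congr' fun lam => eq_comm

theorem isClosed_transposeRepresentable [CompleteSpace E]
    (T : StrongDual 𝕜 E →L[𝕜] StrongDual 𝕜 E) : IsClosed (T.transposeRepresentable : Set E) := by
  have hι : IsClosed (Set.range (inclusionInDoubleDual 𝕜 E)) :=
    (Isometry.isClosedEmbedding (γ := StrongDual 𝕜 (StrongDual 𝕜 E))
      (inclusionInDoubleDualLi 𝕜).isometry).isClosed_range
  exact hι.preimage (ContinuousLinearMap.continuous _)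

end ContinuousLinearMap

section DenseSpan

variable {𝕜 E : Type*} [RCLike 𝕜] [NormedAddCommGroup E] [NormedSpace 𝕜 E]
  {S : Set E} {m : StrongDual 𝕜 E → StrongDual 𝕜 E}

noncomputable def linearMapOfRepresentableOnDenseSpan (hS : Dense (Submodule.span 𝕜 S : Set E))
    (hm : ∀ s ∈ S, ∃ b : E, ∀ lam, m lam s = lam b) :
    StrongDual 𝕜 E →ₗ[𝕜] StrongDual 𝕜 E where
  toFun := m
  map_add' lam lam' := ContinuousLinearMap.ext_on hS fun s hs => by
    obtain ⟨b, hb⟩ := hm s hs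
    simp [hb]
  map_smul' c lam := ContinuousLinearMap.ext_on hS fun s hs => by
    obtain ⟨b, hb⟩ := hm s hs
    simp [hb]

theorem continuous_linearMapOfRepresentableOnDenseSpan (hS : Dense (Submodule.span 𝕜 S : Set E))
    (hm : ∀ s ∈ S, ∃ b : E, ∀ lam, m lam s = lam b) :
    Continuous (linearMapOfRepresentableOnDenseSpan hS hm) :=
  LinearMap.continuous_of_seq_closed_graph _ fun u lam ν hu hmu =>
    ContinuousLinearMap.ext_on hS fun s hs => by
      obtain ⟨b, hb⟩ := hm s hs
      have h₁ : Tendsto (fun n => m (u n) s) atTop (𝓝 (ν s)) :=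
        ((ContinuousLinearMap.apply 𝕜 𝕜 s).continuous.tendsto ν).comp hmu
      have h₂ : Tendsto (fun n => m (u n) s) atTop (𝓝 (m lam s)) := by
        simpa only [hb, Function.comp_def, ContinuousLinearMap.apply_apply] using
          ((ContinuousLinearMap.apply 𝕜 𝕜 b).continuous.tendsto lam).comp hu
      exact tendsto_nhds_unique h₁ h₂

theorem exists_forall_apply_eq_of_dense_span [CompleteSpace E]
    (hS : Dense (Submodule.span 𝕜 S : Set E)) (hm : ∀ s ∈ S, ∃ b : E, ∀ lam, m lam s = lam b)
    (a : E) : ∃ b : E, ∀ lam, m lam a = lam b := by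
  let T : StrongDual 𝕜 E →L[𝕜] StrongDual 𝕜 E :=
    ⟨linearMapOfRepresentableOnDenseSpan hS hm,
      continuous_linearMapOfRepresentableOnDenseSpan hS hm⟩
  have hST : S ⊆ T.transposeRepresentable := fun s hs =>
    ContinuousLinearMap.mem_transposeRepresentable.2 (hm s hs)
  exact ContinuousLinearMap.mem_transposeRepresentable.1 <|
    closure_minimal (Submodule.span_le.2 hST) T.isClosed_transposeRepresentable (hS a)

end DenseSpan

theorem eberlein_dual_is_dual_banach_algebra_general
    {H : Type*} [NormedAddCommGroup H] [InnerProductSpace ℂ H] [CompleteSpace H]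
    {A : Type*} [NonUnitalNormedRing A] [NormedSpace ℂ A] [CompleteSpace A]
    (coef : H → H → A)
    (hdense : Dense (Submodule.span ℂ {a : A | ∃ ξ η : H, a = coef ξ η} : Set A))
    (Vmu : (A →L[ℂ] ℂ) → (H →L[ℂ] H))
    (hVmu : ∀ (μ : A →L[ℂ] ℂ) (ξ η : H), ⟪η, Vmu μ ξ⟫_ℂ = μ (coef ξ η))
    (mul : (A →L[ℂ] ℂ) → (A →L[ℂ] ℂ) → (A →L[ℂ] ℂ))
    (hmulcoef : ∀ (μ lam : A →L[ℂ] ℂ) (ξ η : H),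
      mul μ lam (coef ξ η) = ⟪η, Vmu μ (Vmu lam ξ)⟫_ℂ) :
    -- A* is a dual Banach algebra: A ⊆ A** is a sub-bimodule
    (∀ (μ : A →L[ℂ] ℂ) (a : A),
      (∃ b : A, ∀ lam : A →L[ℂ] ℂ, mul μ lam a = lam b) ∧
      (∃ b : A, ∀ lam : A →L[ℂ] ℂ, mul lam μ a = lam b)) ∧
    -- explicit module actions on the slices
    (∀ (μ lam : A →L[ℂ] ℂ) (ξ η : H),
      mul μ lam (coef ξ η) = lam (coef ξ (ContinuousLinearMap.adjoint (Vmu μ) η)) ∧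
      mul lam μ (coef ξ η) = lam (coef (Vmu μ ξ) η)) := by
  have hleft : ∀ μ lam ξ η,
      mul μ lam (coef ξ η) = lam (coef ξ (ContinuousLinearMap.adjoint (Vmu μ) η)) :=
    fun μ lam ξ η => by rw [hmulcoef, ← hVmu, ContinuousLinearMap.adjoint_inner_left]
  have hright : ∀ μ lam ξ η, mul lam μ (coef ξ η) = lam (coef (Vmu μ ξ) η) :=
    fun μ lam ξ η => by rw [hmulcoef, ← hVmu]
  refine ⟨fun μ a => ⟨?_, ?_⟩, fun μ lam ξ η => ⟨hleft μ lam ξ η, hright μ lam ξ η⟩⟩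
  · refine exists_forall_apply_eq_of_dense_span hdense ?_ a
    rintro _ ⟨ξ, η, rfl⟩
    exact ⟨_, (hleft μ · ξ η)⟩
  · refine exists_forall_apply_eq_of_dense_span hdense ?_ a
    rintro _ ⟨ξ, η, rfl⟩
    exact ⟨_, (hright μ · ξ η)⟩

/-- Let `(A, Φ, V, H)` be a C*-Eberlein algebra, presented via the
slices `coef ξ η = (id ⊗ ω_{ξ,η})(V) ∈ A` (densely spanning), the contractive
homomorphism `μ ↦ V_μ = (μ ⊗ id)(V)`, and the induced associative product
`⟨μ ⋆ λ, coef ξ η⟩ = (V_μ V_λ ξ | η)` on `A*`.  Then `A*` is a dual Banach algebra: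
multiplication is separately weak*-continuous, i.e. for every `μ ∈ A*` and `a ∈ A` the
functionals `λ ↦ ⟨μ ⋆ λ, a⟩` and `λ ↦ ⟨λ ⋆ μ, a⟩` are represented by elements `a·μ` and
`μ·a` of `A`; moreover on the slices the module actions are given by
`(coef ξ η)·μ = (id ⊗ ω_{ξ,η}V_μ)(V) = coef ξ (V_μ* η)` and
`μ·(coef ξ η) = (id ⊗ V_μ ω_{ξ,η})(V) = coef (V_μ ξ) η`. -/
theorem eberlein_dual_is_dual_banach_algebra
    {H : Type*} [NormedAddCommGroup H] [InnerProductSpace ℂ H] [CompleteSpace H]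
    {A : Type*} [NonUnitalNormedRing A] [StarRing A] [CStarRing A]
    [NormedSpace ℂ A] [IsScalarTower ℂ A A] [SMulCommClass ℂ A A] [CompleteSpace A]
    (coef : H → H → A)
    (hdense : Dense (Submodule.span ℂ {a : A | ∃ ξ η : H, a = coef ξ η} : Set A))
    (Vmu : (A →L[ℂ] ℂ) → (H →L[ℂ] H))
    (hVmu : ∀ (μ : A →L[ℂ] ℂ) (ξ η : H), ⟪η, Vmu μ ξ⟫_ℂ = μ (coef ξ η))
    (hVcontr : ∀ μ : A →L[ℂ] ℂ, ‖Vmu μ‖ ≤ ‖μ‖)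
    (mul : (A →L[ℂ] ℂ) → (A →L[ℂ] ℂ) → (A →L[ℂ] ℂ))
    (hmulcoef : ∀ (μ lam : A →L[ℂ] ℂ) (ξ η : H),
      mul μ lam (coef ξ η) = ⟪η, Vmu μ (Vmu lam ξ)⟫_ℂ)
    (hassoc : ∀ μ lam ν : A →L[ℂ] ℂ, mul (mul μ lam) ν = mul μ (mul lam ν))
    (hhom : ∀ μ lam : A →L[ℂ] ℂ, Vmu (mul μ lam) = Vmu μ ∘L Vmu lam) :
    -- A* is a dual Banach algebra: A ⊆ A** is a sub-bimodule
    (∀ (μ : A →L[ℂ] ℂ) (a : A),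
      (∃ b : A, ∀ lam : A →L[ℂ] ℂ, mul μ lam a = lam b) ∧
      (∃ b : A, ∀ lam : A →L[ℂ] ℂ, mul lam μ a = lam b)) ∧
    -- explicit module actions on the slices
    (∀ (μ lam : A →L[ℂ] ℂ) (ξ η : H),
      mul μ lam (coef ξ η) = lam (coef ξ (ContinuousLinearMap.adjoint (Vmu μ) η)) ∧
      mul lam μ (coef ξ η) = lam (coef (Vmu μ ξ) η)) :=
  eberlein_dual_is_dual_banach_algebra_general coef hdense Vmu hVmu mul hmulcoef
end
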